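/- arXiv:2512.12606 — 2 statements merged into one kernel-verified Lean document; each statement's English description precedes it below -/
import Mathlib

section
/- Let S be a numerical semigroup and f an automorphism of P(S). Then for every X ∈ P(S), the gap of f(X) equals the gap of X, where the gap g(X) of a finite set X is the largest d ≥ 1 such that there exist consecutive elements x < x' of X with x' − x = d (equivalently, the maximum difference between consecutive elements of X, and g(X) is undefined/0 for singletons). -/
/-!
Singletons are exactly the cancellative elements of `P(S)`, so `f` restricts to an additive
bijection of `S`, which must be the identity. Adding a long interval forgets everything about a set
but its extremes; hence the displacements of `min` and `max` under `f` depend only on the width, are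
additive in it, and therefore linear, and surjectivity together with positivity forces them to
vanish. Consequently `f` fixes every interval `[a, b]` with `[a, ∞) ⊆ S`. Finally
`gap X ≤ n + 1` exactly when `X + [k, k + n]` is an interval, a property that `f` preserves.
-/

open Pointwise

/-- The power semigroup `P(S)`: finite nonempty subsets of `S`. -/
def PS (S : Set ℕ) : Set (Finset ℕ) := {X | X.Nonempty ∧ (X : Set ℕ) ⊆ S}

/-- `f` is an automorphism of the power semigroup `P(S)`:
an additive bijection of `P(S)` (setwise addition). -/
def IsPowerAut (S : Set ℕ) (f : Finset ℕ → Finset ℕ) : Prop :=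
  (∀ X ∈ PS S, f X ∈ PS S) ∧
  (∀ X ∈ PS S, ∀ Y ∈ PS S, f X = f Y → X = Y) ∧
  (∀ Y ∈ PS S, ∃ X ∈ PS S, f X = Y) ∧
  (∀ X ∈ PS S, ∀ Y ∈ PS S, f (X + Y) = f X + f Y)

/-- `S` is a numerical semigroup: a subsemigroup of `(ℕ, +)` with finite complement. -/
def IsNumSgp (S : Set ℕ) : Prop :=
  (∀ a ∈ S, ∀ b ∈ S, a + b ∈ S) ∧ (Sᶜ).Finite

/-- `k` is the critical element of `S`: the least `k` with `[k, ∞) ⊆ S`. -/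
def IsCritical (S : Set ℕ) (k : ℕ) : Prop :=
  (∀ n, k ≤ n → n ∈ S) ∧ ∀ j, (∀ n, j ≤ n → n ∈ S) → k ≤ j

/-- The gap of a finite set `X ⊆ ℕ`: the maximum of `x' - x` over pairs of
consecutive elements `x < x'` of `X` (and `0` for singletons). -/
def gap (X : Finset ℕ) : ℕ :=
  ((X ×ˢ X).filter
    (fun p => p.1 < p.2 ∧ ∀ y ∈ X, ¬(p.1 < y ∧ y < p.2))).sup (fun p => p.2 - p.1)

open Finset

namespace Finset

-- Junk value `0` on `∅`, so that `lo` and `hi` need no nonemptiness proof.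
noncomputable def lo (X : Finset ℕ) : ℕ := if h : X.Nonempty then X.min' h else 0

noncomputable def hi (X : Finset ℕ) : ℕ := if h : X.Nonempty then X.max' h else 0

variable {X Y : Finset ℕ} {a b x : ℕ}

lemma lo_mem (h : X.Nonempty) : X.lo ∈ X := by
  rw [lo, dif_pos h]; exact X.min'_mem h

lemma hi_mem (h : X.Nonempty) : X.hi ∈ X := by
  rw [hi, dif_pos h]; exact X.max'_mem h

lemma lo_le (hx : x ∈ X) : X.lo ≤ x := by
  rw [lo, dif_pos ⟨x, hx⟩]; exact X.min'_le x hx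

lemma le_hi (hx : x ∈ X) : x ≤ X.hi := by
  rw [hi, dif_pos ⟨x, hx⟩]; exact X.le_max' x hx

lemma lo_le_hi (h : X.Nonempty) : X.lo ≤ X.hi := le_hi (lo_mem h)

lemma lo_eq (ha : a ∈ X) (h : ∀ x ∈ X, a ≤ x) : X.lo = a :=
  le_antisymm (lo_le ha) (h _ (lo_mem ⟨a, ha⟩))

lemma hi_eq (ha : a ∈ X) (h : ∀ x ∈ X, x ≤ a) : X.hi = a :=
  le_antisymm (h _ (hi_mem ⟨a, ha⟩)) (le_hi ha)

lemma eq_singleton_of_lo_eq_hi (h : X.Nonempty) (he : X.lo = X.hi) : X = {X.lo} :=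
  eq_singleton_iff_unique_mem.mpr ⟨lo_mem h, fun _ hx => le_antisymm (he ▸ le_hi hx) (lo_le hx)⟩

lemma lo_add (hX : X.Nonempty) (hY : Y.Nonempty) : (X + Y).lo = X.lo + Y.lo :=
  lo_eq (add_mem_add (lo_mem hX) (lo_mem hY)) fun _ hz => by
    obtain ⟨x, hx, y, hy, rfl⟩ := mem_add.mp hz
    exact add_le_add (lo_le hx) (lo_le hy)

lemma hi_add (hX : X.Nonempty) (hY : Y.Nonempty) : (X + Y).hi = X.hi + Y.hi :=
  hi_eq (add_mem_add (hi_mem hX) (hi_mem hY)) fun _ hz => by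
    obtain ⟨x, hx, y, hy, rfl⟩ := mem_add.mp hz
    exact add_le_add (le_hi hx) (le_hi hy)

@[simp] lemma lo_singleton (a : ℕ) : ({a} : Finset ℕ).lo = a :=
  lo_eq (mem_singleton_self a) (by simp)

@[simp] lemma hi_singleton (a : ℕ) : ({a} : Finset ℕ).hi = a :=
  hi_eq (mem_singleton_self a) (by simp)

lemma lo_add_singleton (hX : X.Nonempty) (a : ℕ) : (X + {a}).lo = X.lo + a := by
  rw [lo_add hX (singleton_nonempty a), lo_singleton]

lemma hi_add_singleton (hX : X.Nonempty) (a : ℕ) : (X + {a}).hi = X.hi + a := by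
  rw [hi_add hX (singleton_nonempty a), hi_singleton]

lemma lo_pair (h : a ≤ b) : ({a, b} : Finset ℕ).lo = a := lo_eq (by simp) (by simpa using h)

lemma hi_pair (h : a ≤ b) : ({a, b} : Finset ℕ).hi = b := hi_eq (by simp) (by simpa using h)

lemma lo_Icc (h : a ≤ b) : (Icc a b).lo = a :=
  lo_eq (left_mem_Icc.mpr h) fun _ hx => (mem_Icc.mp hx).1

lemma hi_Icc (h : a ≤ b) : (Icc a b).hi = b :=
  hi_eq (right_mem_Icc.mpr h) fun _ hx => (mem_Icc.mp hx).2

end Finset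

section Gap

variable {X : Finset ℕ}

lemma gap_le_iff {L : ℕ} :
    gap X ≤ L ↔ ∀ x ∈ X, ∀ y ∈ X, x < y → (∀ z ∈ X, ¬(x < z ∧ z < y)) → y - x ≤ L := by
  simp only [gap, Finset.sup_le_iff, mem_filter, mem_product, and_imp, Prod.forall]
  exact ⟨fun h x hx y hy hxy hz => h x y hx hy hxy hz, fun h x y hx hy hxy hz => h x hx y hy hxy hz⟩

lemma gap_le_hi_sub_lo : gap X ≤ X.hi - X.lo :=
  gap_le_iff.mpr fun _ hx _ hy _ _ => by have := lo_le hx; have := le_hi hy; omega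

lemma exists_mem_le_lt_add_of_gap_le (hX : X.Nonempty) {L n : ℕ} (hg : gap X ≤ L)
    (hlo : X.lo ≤ n) (hhi : n < X.hi) : ∃ x ∈ X, x ≤ n ∧ n < x + L := by
  classical
  set A := X.filter (· ≤ n)
  set B := X.filter (n < ·)
  have hA : A.Nonempty := ⟨X.lo, mem_filter.mpr ⟨lo_mem hX, hlo⟩⟩
  have hB : B.Nonempty := ⟨X.hi, mem_filter.mpr ⟨hi_mem hX, hhi⟩⟩
  obtain ⟨hxX, hxn⟩ := mem_filter.mp (A.max'_mem hA)
  obtain ⟨hyX, hny⟩ := mem_filter.mp (B.min'_mem hB)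
  have hcons : ∀ z ∈ X, ¬(A.max' hA < z ∧ z < B.min' hB) := by
    rintro z hz ⟨h1, h2⟩
    rcases le_or_gt z n with h | h
    · exact absurd (A.le_max' z (mem_filter.mpr ⟨hz, h⟩)) (by omega)
    · exact absurd (B.min'_le z (mem_filter.mpr ⟨hz, h⟩)) (by omega)
  have := gap_le_iff.mp hg _ hxX _ hyX (by omega) hcons
  exact ⟨_, hxX, hxn, by omega⟩

lemma gap_eq_zero_iff (hX : X.Nonempty) : gap X = 0 ↔ X.lo = X.hi := by
  refine ⟨fun h => ?_, fun h => by have := gap_le_hi_sub_lo (X := X); omega⟩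
  by_contra hne
  obtain ⟨x, hx, hxlo, hlox⟩ := exists_mem_le_lt_add_of_gap_le hX h.le le_rfl
    (lt_of_le_of_ne (lo_le_hi hX) hne)
  omega

lemma add_Icc_eq_Icc_iff (hX : X.Nonempty) {c d : ℕ} (hcd : c ≤ d) :
    X + Icc c d = Icc (X.lo + c) (X.hi + d) ↔ gap X ≤ d - c + 1 := by
  constructor
  · refine fun h => gap_le_iff.mpr fun x hx y hy _ hcons => ?_
    by_contra hbig
    have hmem : x + d + 1 ∈ X + Icc c d :=
      h ▸ mem_Icc.mpr ⟨by have := lo_le hx; omega, by have := le_hi hy; omega⟩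
    obtain ⟨z, hz, t, ht, hzt⟩ := mem_add.mp hmem
    rw [mem_Icc] at ht
    exact hcons z hz (by omega)
  · refine fun hg => ext fun m => ?_
    rw [mem_add, mem_Icc]
    constructor
    · rintro ⟨x, hx, t, ht, rfl⟩
      rw [mem_Icc] at ht
      have := lo_le hx; have := le_hi hx
      omega
    · rintro ⟨h1, h2⟩
      by_cases hm : X.hi + c ≤ m
      · exact ⟨X.hi, hi_mem hX, m - X.hi, mem_Icc.mpr (by omega), by omega⟩
      · obtain ⟨x, hx, hxm, hmx⟩ :=
          exists_mem_le_lt_add_of_gap_le hX hg (n := m - c) (by omega) (by omega)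
        exact ⟨x, hx, m - x, mem_Icc.mpr (by omega), by omega⟩

lemma add_Icc_eq_Icc (hX : X.Nonempty) {c d : ℕ} (h : X.hi - X.lo ≤ d - c + 1) (hcd : c ≤ d) :
    X + Icc c d = Icc (X.lo + c) (X.hi + d) :=
  (add_Icc_eq_Icc_iff hX hcd).mpr (gap_le_hi_sub_lo.trans h)

end Gap

section PowerSemigroup

variable {S : Set ℕ} {X Y : Finset ℕ} {k a b : ℕ}

lemma add_mem_PS (hadd : ∀ a ∈ S, ∀ b ∈ S, a + b ∈ S) (hX : X ∈ PS S) (hY : Y ∈ PS S) :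
    X + Y ∈ PS S := by
  refine ⟨hX.1.add hY.1, fun n hn => ?_⟩
  obtain ⟨x, hx, y, hy, rfl⟩ := mem_add.mp hn
  exact hadd x (hX.2 hx) y (hY.2 hy)

lemma singleton_mem_PS (ha : a ∈ S) : {a} ∈ PS S :=
  ⟨singleton_nonempty a, by simpa using ha⟩

lemma pair_mem_PS (ha : a ∈ S) (hb : b ∈ S) : {a, b} ∈ PS S :=
  ⟨insert_nonempty a {b}, by simp [Set.insert_subset_iff, ha, hb]⟩

lemma Icc_mem_PS (hk : ∀ n, k ≤ n → n ∈ S) (hka : k ≤ a) (hab : a ≤ b) : Icc a b ∈ PS S :=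
  ⟨nonempty_Icc.mpr hab, fun _ hx => hk _ (hka.trans (mem_Icc.mp hx).1)⟩

def IsCancellative (S : Set ℕ) (X : Finset ℕ) : Prop :=
  ∀ Y ∈ PS S, ∀ Z ∈ PS S, X + Y = X + Z → Y = Z

lemma isCancellative_singleton (a : ℕ) : IsCancellative S {a} := by
  intro Y _ Z _ h
  simp only [singleton_add, ← image_vadd] at h
  exact image_injective (add_right_injective a) h

lemma lo_eq_hi_of_isCancellative (hk : ∀ n, k ≤ n → n ∈ S) (hX : X ∈ PS S)
    (hc : IsCancellative S X) : X.lo = X.hi := by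
  by_contra hne
  have hlt := lt_of_le_of_ne (lo_le_hi hX.1) hne
  set w := X.hi - X.lo
  -- the hole at `k + w + 1` is filled after adding `X`, whose width is `w ≥ 1`
  have hY : Icc k (k + 2 * w + 2) ∈ PS S := Icc_mem_PS hk le_rfl (by omega)
  have hZ : Icc k (k + w) ∪ Icc (k + w + 2) (k + 2 * w + 2) ∈ PS S :=
    ⟨⟨k, by simp⟩, fun n hn => hk n (by simp at hn; omega)⟩
  have hYZ : Icc k (k + 2 * w + 2) ≠ Icc k (k + w) ∪ Icc (k + w + 2) (k + 2 * w + 2) := by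
    intro h
    have : k + w + 1 ∈ Icc k (k + 2 * w + 2) := mem_Icc.mpr (by omega)
    rw [h] at this
    simp at this
  refine hYZ (hc _ hY _ hZ ?_)
  rw [add_union, add_Icc_eq_Icc hX.1 (by omega) (by omega),
    add_Icc_eq_Icc hX.1 (by omega) (by omega), add_Icc_eq_Icc hX.1 (by omega) (by omega)]
  ext n
  simp only [mem_union, mem_Icc]
  omega

end PowerSemigroup

/-- `σ` is multiplication by `σ (k + 1) / (k + 1)`, and this ratio divides both `k` and `k + 1`. -/
lemma eqOn_id_of_map_add_of_surjOn {S : Set ℕ} (hadd : ∀ a ∈ S, ∀ b ∈ S, a + b ∈ S) {k : ℕ}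
    (hk : ∀ n, k ≤ n → n ∈ S) {σ : ℕ → ℕ} (hσ : ∀ s ∈ S, ∀ t ∈ S, σ (s + t) = σ s + σ t)
    (hsurj : Set.SurjOn σ S S) : Set.EqOn σ id S := by
  have hmul : ∀ s ∈ S, ∀ n, (n + 1) * s ∈ S ∧ σ ((n + 1) * s) = (n + 1) * σ s := by
    intro s hs n
    induction n with
    | zero => simpa using hs
    | succ n ih =>
      rw [add_one_mul (n + 1), hσ _ ih.1 _ hs, ih.2]
      exact ⟨hadd _ ih.1 _ hs, by ring⟩
  have hzero : 0 ∈ S → σ 0 = 0 := fun h0 => by simpa using hσ 0 h0 0 h0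
  have hcross : ∀ s ∈ S, (k + 1) * σ s = s * σ (k + 1) := by
    intro s hs
    rcases s with _ | s
    · simp [hzero hs]
    · rw [← (hmul _ hs k).2, ← (hmul _ (hk _ k.le_succ) s).2, mul_comm]
  obtain ⟨r, hr⟩ : k + 1 ∣ σ (k + 1) := by
    have hcop : Nat.Coprime (k + 1) (k + 1 + 1) :=
      Nat.coprime_self_add_right.mpr (Nat.coprime_one_right _)
    exact hcop.dvd_of_dvd_mul_left ⟨_, (hcross _ (hk _ (by omega))).symm⟩
  have hlin : ∀ s ∈ S, σ s = r * s := fun s hs =>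
    Nat.eq_of_mul_eq_mul_left k.succ_pos (by rw [hcross s hs, hr, Nat.succ_eq_add_one]; ring)
  have hdvd : ∀ t ∈ S, r ∣ t := fun t ht => by
    obtain ⟨s, hs, rfl⟩ := hsurj ht
    exact ⟨s, hlin s hs⟩
  have hr1 : r = 1 := Nat.dvd_one.mp
    ((Nat.dvd_add_iff_right (hdvd k (hk k le_rfl))).mpr (hdvd (k + 1) (hk _ k.le_succ)))
  intro s hs
  simp [hlin s hs, hr1]

section Automorphism

variable {S : Set ℕ} {k : ℕ} {f : Finset ℕ → Finset ℕ} {X Y : Finset ℕ}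

lemma IsPowerAut.map_mem (hf : IsPowerAut S f) (hX : X ∈ PS S) : f X ∈ PS S := hf.1 X hX

lemma IsPowerAut.injOn (hf : IsPowerAut S f) : Set.InjOn f (PS S) := hf.2.1

lemma IsPowerAut.surjOn (hf : IsPowerAut S f) : Set.SurjOn f (PS S) (PS S) := hf.2.2.1

lemma IsPowerAut.map_add (hf : IsPowerAut S f) (hX : X ∈ PS S) (hY : Y ∈ PS S) :
    f (X + Y) = f X + f Y :=
  hf.2.2.2 X hX Y hY

variable (hadd : ∀ a ∈ S, ∀ b ∈ S, a + b ∈ S) (hk : ∀ n, k ≤ n → n ∈ S) (hf : IsPowerAut S f)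

include hadd hf in
lemma IsPowerAut.isCancellative_map_iff (hX : X ∈ PS S) :
    IsCancellative S (f X) ↔ IsCancellative S X := by
  constructor
  · intro hc Y hY Z hZ h
    refine hf.injOn hY hZ (hc _ (hf.map_mem hY) _ (hf.map_mem hZ) ?_)
    rw [← hf.map_add hX hY, ← hf.map_add hX hZ, h]
  · intro hc Y hY Z hZ h
    obtain ⟨Y', hY', rfl⟩ := hf.surjOn hY
    obtain ⟨Z', hZ', rfl⟩ := hf.surjOn hZ
    rw [← hf.map_add hX hY', ← hf.map_add hX hZ'] at h
    rw [hc _ hY' _ hZ' (hf.injOn (add_mem_PS hadd hX hY') (add_mem_PS hadd hX hZ') h)]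

include hadd hk hf in
lemma IsPowerAut.map_singleton {s : ℕ} (hs : s ∈ S) : f {s} = {s} := by
  have hsingle : ∀ {Y}, Y ∈ PS S → IsCancellative S Y → Y = {Y.hi} := fun hY hc => by
    rw [← lo_eq_hi_of_isCancellative hk hY hc]
    exact eq_singleton_of_lo_eq_hi hY.1 (lo_eq_hi_of_isCancellative hk hY hc)
  have hσ : Set.EqOn (fun s => (f {s}).hi) id S := by
    refine eqOn_id_of_map_add_of_surjOn hadd hk (fun s hs t ht => ?_) (fun t ht => ?_)
    · rw [← singleton_add_singleton, hf.map_add (singleton_mem_PS hs) (singleton_mem_PS ht),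
        hi_add (hf.map_mem (singleton_mem_PS hs)).1 (hf.map_mem (singleton_mem_PS ht)).1]
    · obtain ⟨Y, hY, hYt⟩ := hf.surjOn (singleton_mem_PS ht)
      have hY1 := hsingle hY
        ((hf.isCancellative_map_iff hadd hY).mp (hYt ▸ isCancellative_singleton t))
      refine ⟨Y.hi, hY.2 (hY1 ▸ mem_singleton_self _ : Y.hi ∈ Y), ?_⟩
      simp only [← hY1, hYt, hi_singleton]
  have hfs := hf.map_mem (singleton_mem_PS hs)
  rw [hsingle hfs ((hf.isCancellative_map_iff hadd (singleton_mem_PS hs)).mpr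
    (isCancellative_singleton s))]
  exact congrArg _ (hσ hs)


include hk hf in
/-- Two sets with the same extremes become equal after adding a long interval to both. -/
lemma IsPowerAut.lo_hi_map_congr (hX : X ∈ PS S) (hY : Y ∈ PS S) (hlo : X.lo = Y.lo)
    (hhi : X.hi = Y.hi) : (f X).lo = (f Y).lo ∧ (f X).hi = (f Y).hi := by
  have hI : Icc k (k + (X.hi - X.lo)) ∈ PS S := Icc_mem_PS hk le_rfl (by omega)
  have hXY : X + Icc k (k + (X.hi - X.lo)) = Y + Icc k (k + (X.hi - X.lo)) := by
    rw [add_Icc_eq_Icc hX.1 (by omega) (by omega), add_Icc_eq_Icc hY.1 (by omega) (by omega),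
      hlo, hhi]
  have h := congrArg f hXY
  rw [hf.map_add hX hI, hf.map_add hY hI] at h
  have hfI := (hf.map_mem hI).1
  have hlo' := congrArg lo h
  have hhi' := congrArg hi h
  rw [lo_add (hf.map_mem hX).1 hfI, lo_add (hf.map_mem hY).1 hfI] at hlo'
  rw [hi_add (hf.map_mem hX).1 hfI, hi_add (hf.map_mem hY).1 hfI] at hhi'
  exact ⟨by omega, by omega⟩

include hadd hk hf in
lemma IsPowerAut.lo_hi_map_of_hi_add_lo_eq (hX : X ∈ PS S) (hY : Y ∈ PS S)
    (hw : X.hi + Y.lo = Y.hi + X.lo) :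
    (f X).lo + Y.lo = (f Y).lo + X.lo ∧ (f X).hi + Y.lo = (f Y).hi + X.lo := by
  have hYlo := singleton_mem_PS (hY.2 (lo_mem hY.1))
  have hXlo := singleton_mem_PS (hX.2 (lo_mem hX.1))
  have h := hf.lo_hi_map_congr hk (add_mem_PS hadd hX hYlo) (add_mem_PS hadd hY hXlo)
    (by rw [lo_add_singleton hX.1, lo_add_singleton hY.1, add_comm])
    (by rw [hi_add_singleton hX.1, hi_add_singleton hY.1, hw])
  rw [hf.map_add hX hYlo, hf.map_add hY hXlo, hf.map_singleton hadd hk (hY.2 (lo_mem hY.1)),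
    hf.map_singleton hadd hk (hX.2 (lo_mem hX.1)), lo_add_singleton (hf.map_mem hX).1,
    lo_add_singleton (hf.map_mem hY).1, hi_add_singleton (hf.map_mem hX).1,
    hi_add_singleton (hf.map_mem hY).1] at h
  exact h

include hadd hk hf in
/-- The displacements depend only on the width and add up under `+`, so they are linear. -/
lemma IsPowerAut.exists_lo_hi_map : ∃ c e : ℤ, ∀ X ∈ PS S,
    ((f X).lo : ℤ) = X.lo + (X.hi - X.lo : ℕ) * c ∧
      ((f X).hi : ℤ) = X.lo + (X.hi - X.lo : ℕ) * e := by
  have hR : ∀ w, Icc k (k + w) ∈ PS S := fun w => Icc_mem_PS hk le_rfl (by omega)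
  set δ : ℕ → ℤ := fun w => (f (Icc k (k + w))).lo - k
  set ε : ℕ → ℤ := fun w => (f (Icc k (k + w))).hi - k
  have hwidth : ∀ X ∈ PS S, ((f X).lo : ℤ) = X.lo + δ (X.hi - X.lo) ∧
      ((f X).hi : ℤ) = X.lo + ε (X.hi - X.lo) := by
    intro X hX
    have := lo_le_hi hX.1
    have h := hf.lo_hi_map_of_hi_add_lo_eq hadd hk hX (hR (X.hi - X.lo))
      (by rw [lo_Icc (by omega), hi_Icc (by omega)]; omega)
    rw [lo_Icc (by omega)] at h
    simp only [δ, ε]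
    omega
  have hadditive : ∀ w w', δ (w + w') = δ w + δ w' ∧ ε (w + w') = ε w + ε w' := by
    intro w w'
    have h := hwidth _ (add_mem_PS hadd (hR w) (hR w'))
    rw [hf.map_add (hR w) (hR w'), lo_add (hf.map_mem (hR w)).1 (hf.map_mem (hR w')).1,
      hi_add (hf.map_mem (hR w)).1 (hf.map_mem (hR w')).1, lo_add (hR w).1 (hR w').1,
      hi_add (hR w).1 (hR w').1, lo_Icc (by omega), lo_Icc (by omega), hi_Icc (by omega),
      hi_Icc (by omega), show k + w + (k + w') - (k + k) = w + w' by omega] at h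
    simp only [δ, ε] at h ⊢
    push_cast at h
    omega
  have hδ (n : ℕ) : δ n = n * δ 1 := by
    simpa using (AddMonoidHom.mk' δ fun _ _ => (hadditive _ _).1).apply_nat n
  have hε (n : ℕ) : ε n = n * ε 1 := by
    simpa using (AddMonoidHom.mk' ε fun _ _ => (hadditive _ _).2).apply_nat n
  refine ⟨δ 1, ε 1, fun X hX => ?_⟩
  rw [← hδ, ← hε]
  exact hwidth X hX

include hadd hk hf in
lemma IsPowerAut.lo_hi_map (hX : X ∈ PS S) : (f X).lo = X.lo ∧ (f X).hi = X.hi := by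
  obtain ⟨c, e, h⟩ := hf.exists_lo_hi_map hadd hk
  have hR : ∀ w, Icc k (k + w) ∈ PS S := fun w => Icc_mem_PS hk le_rfl (by omega)
  have hpre : ∀ w : ℕ, ∃ Y ∈ PS S, (Y.lo : ℤ) + (Y.hi - Y.lo : ℕ) * c = k ∧
      (Y.lo : ℤ) + (Y.hi - Y.lo : ℕ) * e = k + w := by
    intro w
    obtain ⟨Y, hY, hYw⟩ := hf.surjOn (hR w)
    have hlohi := h Y hY
    rw [hYw, lo_Icc (by omega), hi_Icc (by omega)] at hlohi
    push_cast at hlohi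
    exact ⟨Y, hY, hlohi.1.symm, hlohi.2.symm⟩
  have he : e = c + 1 := by
    obtain ⟨Y, -, h1, h2⟩ := hpre 1
    have hw : ((Y.hi - Y.lo : ℕ) : ℤ) * (e - c) = 1 := by linear_combination h2 - h1
    rcases Int.eq_one_or_neg_one_of_mul_eq_one' hw with ⟨_, h⟩ | ⟨h, _⟩ <;> omega
  have hc0 : 0 ≤ c := by
    have hlo := (h _ (hR (k + 1))).1
    rw [lo_Icc (by omega), hi_Icc (by omega), show k + (k + 1) - k = k + 1 by omega] at hlo
    push_cast at hlo
    nlinarith [hlo ▸ Int.natCast_nonneg _]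
  have hc1 : c ≤ 0 := by
    obtain ⟨Y, -, h1, h2⟩ := hpre (k + 1)
    rw [he] at h2
    have hw : ((Y.hi - Y.lo : ℕ) : ℤ) = k + 1 := by push_cast at h1 h2 ⊢; linarith
    rw [hw] at h1
    nlinarith [Int.natCast_nonneg Y.lo]
  have hX' := h X hX
  rw [show c = 0 by omega, show e = 1 by omega] at hX'
  have := lo_le_hi hX.1
  omega

include hadd hk hf in
lemma IsPowerAut.map_Icc {a b : ℕ} (hka : k ≤ a) (hab : a ≤ b) : f (Icc a b) = Icc a b := by
  have hI := Icc_mem_PS hk hka hab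
  have hU := hf.map_mem hI
  obtain ⟨hUlo, hUhi⟩ := hf.lo_hi_map hadd hk hI
  rw [lo_Icc hab] at hUlo
  rw [hi_Icc hab] at hUhi
  have hfill : ∀ Z : Finset ℕ, Z.Nonempty → Z.lo = a → Z.hi = b →
      Z + Icc a b = Icc (a + a) (b + b) := by
    intro Z hZ hlo hhi
    rw [add_Icc_eq_Icc hZ (by omega) hab, hlo, hhi]
  have hpre : ∀ Y ∈ PS S, Y.lo = a → Y.hi = b → Y + f (Icc a b) = f (Icc (a + a) (b + b)) := by
    intro Y hY hlo hhi
    obtain ⟨Z, hZ, rfl⟩ := hf.surjOn hY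
    obtain ⟨hZlo, hZhi⟩ := hf.lo_hi_map hadd hk hZ
    rw [← hf.map_add hZ hI, hfill Z hZ.1 (hZlo.symm.trans hlo) (hZhi.symm.trans hhi)]
  have hdouble : f (Icc (a + a) (b + b)) = Icc (a + a) (b + b) := by
    rw [← hpre _ hI (lo_Icc hab) (hi_Icc hab), add_comm, hfill _ hU.1 hUlo hUhi]
  have hpair := hpre _ (pair_mem_PS (hk a hka) (hk b (hka.trans hab))) (lo_pair hab) (hi_pair hab)
  rw [hdouble] at hpair
  ext n
  refine ⟨fun hn => mem_Icc.mpr ⟨hUlo ▸ lo_le hn, hUhi ▸ le_hi hn⟩, fun hn => ?_⟩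
  rw [mem_Icc] at hn
  rcases hn.2.eq_or_lt with hnb | hnb
  · have := hi_mem hU.1
    rw [hUhi] at this
    rwa [hnb]
  · -- as every element of `f (Icc a b)` is at least `a`, the sum `a + n < a + b` must use `a`
    obtain ⟨u, hu, v, hv, huv⟩ := mem_add.mp (hpair ▸ mem_Icc.mpr ⟨by omega, by omega⟩ :
      a + n ∈ {a, b} + f (Icc a b))
    have := hUlo ▸ lo_le hv
    rcases mem_insert.mp hu with rfl | hu
    · rwa [show n = v by omega]
    · rw [mem_singleton] at hu
      omega

include hadd hk hf in
lemma IsPowerAut.gap_map_le_iff (hX : X ∈ PS S) (n : ℕ) :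
    gap (f X) ≤ n + 1 ↔ gap X ≤ n + 1 := by
  have hkn : k ≤ k + n := le_add_right le_rfl
  have hI := Icc_mem_PS hk le_rfl hkn
  have hJ := Icc_mem_PS hk (le_add_left le_rfl) (add_le_add (lo_le_hi hX.1) hkn)
  obtain ⟨hlo, hhi⟩ := hf.lo_hi_map hadd hk hX
  have hfI : f X + Icc k (k + n) = f (X + Icc k (k + n)) := by
    rw [hf.map_add hX hI, hf.map_Icc hadd hk le_rfl hkn]
  have hfJ := hf.map_Icc hadd hk (le_add_left le_rfl) (add_le_add (lo_le_hi hX.1) hkn)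
  rw [show n + 1 = k + n - k + 1 by omega, ← add_Icc_eq_Icc_iff (hf.map_mem hX).1 hkn,
    ← add_Icc_eq_Icc_iff hX.1 hkn, hlo, hhi, hfI]
  exact ⟨fun h => hf.injOn (add_mem_PS hadd hX hI) hJ (h.trans hfJ.symm),
    fun h => by rw [h, hfJ]⟩

include hadd hk hf in
lemma IsPowerAut.gap_map (hX : X ∈ PS S) : gap (f X) = gap X := by
  obtain ⟨hlo, hhi⟩ := hf.lo_hi_map hadd hk hX
  have hzero : gap (f X) = 0 ↔ gap X = 0 := by
    rw [gap_eq_zero_iff (hf.map_mem hX).1, gap_eq_zero_iff hX.1, hlo, hhi]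
  have h1 := hf.gap_map_le_iff hadd hk hX (gap X - 1)
  have h2 := hf.gap_map_le_iff hadd hk hX (gap (f X) - 1)
  omega

end Automorphism

/-- An automorphism of `P(S)` preserves the gap of every set. -/
theorem stmt5 (S : Set ℕ) (hS : IsNumSgp S) (f : Finset ℕ → Finset ℕ)
    (hf : IsPowerAut S f) :
    ∀ X : Finset ℕ, X.Nonempty → (X : Set ℕ) ⊆ S → gap (f X) = gap X := by
  obtain ⟨hadd, hfin⟩ := hS
  obtain ⟨m, hm⟩ := hfin.bddAbove
  have hk : ∀ n, m + 1 ≤ n → n ∈ S := fun n hn => by_contra fun h => absurd (hm h) (by omega)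
  exact fun X hne hsub => hf.gap_map hadd hk ⟨hne, hsub⟩
end

section
/- Let S be a numerical semigroup with critical element k, and set S_θ = {n ∈ ℕ : n ≥ k}. Then every automorphism f of P(S) maps P(S_θ) into itself, and the restriction of f to P(S_θ) is an automorphism of P(S_θ). -/
/-!
Singletons are exactly the cancellable elements of `P(S)`, so `f` permutes them and induces an
additive bijection of `S`; such a bijection multiplies by a fixed ratio and fixes the least
positive element of `S`, hence is the identity. So `f` commutes with translations, and
`X ↦ min f(X) - min X` is additive on `P(S)` and depends only on `max X - min X`, because adding a
long interval forgets the interior of `X`. Being bounded below by `-k`, it is nonnegative.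
Applied to `f` and to `f⁻¹` this shows that `f` preserves minima, and `P(S_θ)` consists of the
sets with minimum at least `k`.
-/
open Pointwise

namespace Finset

variable {X : Finset ℕ}

noncomputable def minElt (X : Finset ℕ) : ℕ := sInf (X : Set ℕ)

theorem isLeast_minElt (hX : X.Nonempty) : IsLeast (X : Set ℕ) X.minElt :=
  ⟨Nat.sInf_mem (coe_nonempty.mpr hX), fun _ hx => Nat.sInf_le hx⟩

theorem minElt_eq {a : ℕ} (h : IsLeast (X : Set ℕ) a) : X.minElt = a :=
  h.csInf_eq

theorem minElt_singleton (a : ℕ) : minElt {a} = a :=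
  minElt_eq (by simp)

theorem minElt_le {x : ℕ} (hx : x ∈ X) : X.minElt ≤ x :=
  Nat.sInf_le hx

theorem le_minElt_iff (hX : X.Nonempty) {j : ℕ} : j ≤ X.minElt ↔ ∀ x ∈ X, j ≤ x :=
  ⟨fun h _ hx => h.trans (minElt_le hx), fun h => h _ (isLeast_minElt hX).1⟩

theorem minElt_add {Y : Finset ℕ} (hX : X.Nonempty) (hY : Y.Nonempty) :
    minElt (X + Y) = X.minElt + Y.minElt := by
  have hX' := isLeast_minElt hX
  have hY' := isLeast_minElt hY
  exact minElt_eq (by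
    rw [coe_add]
    exact ⟨Set.add_mem_add hX'.1 hY'.1, add_mem_lowerBounds_add hX'.2 hY'.2⟩)

theorem singleton_add_injective (s : ℕ) : Function.Injective (({s} : Finset ℕ) + ·) := by
  intro Y Z h
  simp only [singleton_add] at h
  exact image_injective (add_right_injective s) h

theorem add_Icc_eq_Icc {a b c d : ℕ} (hab : {a, b} ⊆ X) (hX : X ⊆ Icc a b)
    (hcd : b + c ≤ a + d + 1) : X + Icc c d = Icc (a + c) (b + d) := by
  ext n
  simp only [mem_add, mem_Icc]
  constructor
  · rintro ⟨x, hx, y, hy, rfl⟩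
    have := mem_Icc.mp (hX hx)
    omega
  · intro hn
    by_cases h : n ≤ a + d
    · exact ⟨a, hab (by simp), n - a, by omega, by omega⟩
    · exact ⟨b, hab (by simp), n - b, by omega, by omega⟩

theorem add_Icc_erase_eq {m d k : ℕ} (hd : 0 < d) (hmd : {m, m + d} ⊆ X)
    (hX : X ⊆ Icc m (m + d)) :
    X + (Icc k (k + 2 * d)).erase (k + d) = X + Icc k (k + 2 * d) := by
  refine (add_subset_add_left (erase_subset _ _)).antisymm ?_
  intro z hz
  obtain ⟨x, hx, y, hy, rfl⟩ := mem_add.mp hz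
  have hxI := mem_Icc.mp (hX hx)
  have hyI := mem_Icc.mp hy
  by_cases hyd : y = k + d
  · by_cases hxm : x = m
    · -- the deleted sum `m + (k + d)` is recovered as `(m + d) + k`
      refine mem_add.mpr ⟨m + d, hmd (by simp), k, ?_, by omega⟩
      simp only [mem_erase, mem_Icc]
      omega
    · refine mem_add.mpr ⟨m, hmd (by simp), y + (x - m), ?_, by omega⟩
      simp only [mem_erase, mem_Icc]
      omega
  · exact add_mem_add hx (mem_erase.mpr ⟨hyd, hy⟩)

end Finset

theorem Set.mul_apply_comm_of_map_add {S : Set ℕ} (hS : ∀ a ∈ S, ∀ b ∈ S, a + b ∈ S) {g : ℕ → ℕ}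
    (hadd : ∀ a ∈ S, ∀ b ∈ S, g (a + b) = g a + g b) {a b : ℕ} (ha : a ∈ S) (hb : b ∈ S) :
    a * g b = b * g a := by
  have hzero : 0 ∈ S → g 0 = 0 := fun h0 => by simpa using hadd 0 h0 0 h0
  have hmul : ∀ a ∈ S, ∀ n : ℕ, (n + 1) * a ∈ S ∧ g ((n + 1) * a) = (n + 1) * g a := by
    intro a ha n
    induction n with
    | zero => simpa using ha
    | succ n ih =>
      rw [add_mul _ 1, one_mul, hadd _ ih.1 _ ha, ih.2]
      exact ⟨hS _ ih.1 _ ha, by ring⟩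
  -- both sides equal `g (a * b)`
  cases a with
  | zero => simp [hzero ha]
  | succ a =>
    cases b with
    | zero => simp [hzero hb]
    | succ b => rw [← (hmul _ hb a).2, ← (hmul _ ha b).2, mul_comm]

theorem Set.eqOn_id_of_bijOn_of_map_add {S : Set ℕ} (hS : ∀ a ∈ S, ∀ b ∈ S, a + b ∈ S)
    {g : ℕ → ℕ} (hg : Set.BijOn g S S) (hadd : ∀ a ∈ S, ∀ b ∈ S, g (a + b) = g a + g b) :
    Set.EqOn g id S := by
  classical
  have hzero : 0 ∈ S → g 0 = 0 := fun h0 => by simpa using hadd 0 h0 0 h0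
  by_cases hpos : ∃ n, n ∈ S ∧ n ≠ 0
  · -- the least positive element `m` is fixed: `g m ≥ m`, and its preimage is `≥ m`
    set m := Nat.find hpos
    obtain ⟨hmS, hm0⟩ : m ∈ S ∧ m ≠ 0 := Nat.find_spec hpos
    have hgm0 : g m ≠ 0 := by
      intro h
      have h0 : 0 ∈ S := h ▸ hg.mapsTo hmS
      exact hm0 (hg.injOn hmS h0 (by rw [h, hzero h0]))
    have hm_le_gm : m ≤ g m := Nat.find_min' hpos ⟨hg.mapsTo hmS, hgm0⟩
    obtain ⟨s, hs, hgs⟩ := hg.surjOn hmS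
    have hs0 : s ≠ 0 := by
      rintro rfl
      exact hm0 (hgs ▸ hzero hs)
    have hm_le_s : m ≤ s := Nat.find_min' hpos ⟨hs, hs0⟩
    have hsm := Set.mul_apply_comm_of_map_add hS hadd hs hmS
    rw [hgs] at hsm
    have hgm : g m = m := by
      nlinarith [Nat.mul_le_mul_right (g m) hm_le_s, Nat.pos_of_ne_zero hm0]
    intro x hx
    have hxm := Set.mul_apply_comm_of_map_add hS hadd hx hmS
    rw [hgm] at hxm
    exact Nat.eq_of_mul_eq_mul_left (Nat.pos_of_ne_zero hm0) (hxm.symm.trans (mul_comm x m))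
  · push Not at hpos
    intro x hx
    obtain rfl := hpos x hx
    exact hzero hx

namespace PS

variable {S : Set ℕ} {X Y : Finset ℕ}

theorem add_mem (hS : ∀ a ∈ S, ∀ b ∈ S, a + b ∈ S) (hX : X ∈ PS S) (hY : Y ∈ PS S) :
    X + Y ∈ PS S := by
  refine ⟨hX.1.add hY.1, fun z hz => ?_⟩
  obtain ⟨x, hx, y, hy, rfl⟩ := Finset.mem_add.mp (Finset.mem_coe.mp hz)
  exact hS x (hX.2 hx) y (hY.2 hy)

theorem singleton_mem {s : ℕ} (hs : s ∈ S) : {s} ∈ PS S :=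
  ⟨Finset.singleton_nonempty s, by simpa using hs⟩

theorem mem_of_forall_le {k : ℕ} (hk : ∀ n, k ≤ n → n ∈ S) (hX : X.Nonempty)
    (hXk : ∀ x ∈ X, k ≤ x) : X ∈ PS S :=
  ⟨hX, fun x hx => hk x (hXk x hx)⟩

theorem mem_Ici_iff {k : ℕ} (hk : ∀ n, k ≤ n → n ∈ S) :
    X ∈ PS {n | k ≤ n} ↔ X ∈ PS S ∧ k ≤ X.minElt := by
  refine ⟨fun h => ⟨mem_of_forall_le hk h.1 fun x hx => h.2 hx,
    (Finset.le_minElt_iff h.1).mpr fun x hx => h.2 hx⟩, fun h => ⟨h.1.1, fun x hx => ?_⟩⟩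
  exact (Finset.le_minElt_iff h.1.1).mp h.2 x hx

theorem exists_add_eq_add_ne {k : ℕ} (hk : ∀ n, k ≤ n → n ∈ S) (hX : X ∈ PS S)
    (hX1 : ∀ s, X ≠ {s}) : ∃ Y ∈ PS S, ∃ Z ∈ PS S, X + Y = X + Z ∧ Y ≠ Z := by
  obtain ⟨a, rfl⟩ | hnt := hX.1.exists_eq_singleton_or_nontrivial
  · exact absurd rfl (hX1 a)
  set m := X.min' hX.1
  set d := X.max' hX.1 - m
  have hd : 0 < d := Nat.sub_pos_of_lt <|
    Finset.min'_lt_max'_of_card _ (Finset.one_lt_card_iff_nontrivial.mpr hnt)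
  have hmd : {m, m + d} ⊆ X := by
    rw [Finset.insert_subset_iff, Finset.singleton_subset_iff,
      Nat.add_sub_of_le (X.min'_le _ (X.max'_mem hX.1))]
    exact ⟨X.min'_mem hX.1, X.max'_mem hX.1⟩
  have hXI : X ⊆ Finset.Icc m (m + d) := fun x hx =>
    Finset.mem_Icc.mpr ⟨X.min'_le x hx, by have := X.le_max' x hx; omega⟩
  refine ⟨Finset.Icc k (k + 2 * d), ?_, (Finset.Icc k (k + 2 * d)).erase (k + d), ?_,
    (Finset.add_Icc_erase_eq hd hmd hXI).symm, fun h => ?_⟩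
  · exact mem_of_forall_le hk (Finset.nonempty_Icc.mpr (by omega))
      fun y hy => (Finset.mem_Icc.mp hy).1
  · refine mem_of_forall_le hk ⟨k, ?_⟩
      fun y hy => (Finset.mem_Icc.mp (Finset.mem_of_mem_erase hy)).1
    simp only [Finset.mem_erase, Finset.mem_Icc]
    omega
  · have : k + d ∈ (Finset.Icc k (k + 2 * d)).erase (k + d) :=
      h ▸ Finset.mem_Icc.mpr ⟨by omega, by omega⟩
    simp at this

end PS

namespace IsPowerAut

variable {S : Set ℕ} {f : Finset ℕ → Finset ℕ} {X Y : Finset ℕ}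

theorem bijOn (hf : IsPowerAut S f) : Set.BijOn f (PS S) (PS S) :=
  ⟨hf.1, hf.2.1, hf.2.2.1⟩

theorem map_add_s7 (hf : IsPowerAut S f) (hX : X ∈ PS S) (hY : Y ∈ PS S) :
    f (X + Y) = f X + f Y :=
  hf.2.2.2 X hX Y hY

theorem invFunOn (hS : ∀ a ∈ S, ∀ b ∈ S, a + b ∈ S) (hf : IsPowerAut S f) :
    IsPowerAut S (Function.invFunOn f (PS S)) := by
  have hinv := hf.bijOn.invOn_invFunOn
  have hbij := hf.bijOn.symm hinv.symm
  refine ⟨hbij.mapsTo, hbij.injOn, hbij.surjOn, fun Y hY Z hZ => hf.bijOn.injOn ?_ ?_ ?_⟩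
  · exact hbij.mapsTo (PS.add_mem hS hY hZ)
  · exact PS.add_mem hS (hbij.mapsTo hY) (hbij.mapsTo hZ)
  · rw [hf.map_add_s7 (hbij.mapsTo hY) (hbij.mapsTo hZ), hinv.2 hY, hinv.2 hZ,
      hinv.2 (PS.add_mem hS hY hZ)]

/-- Singletons are the cancellable elements of `P(S)`, and `f` preserves cancellability. -/
theorem exists_map_singleton_eq {k : ℕ} (hS : ∀ a ∈ S, ∀ b ∈ S, a + b ∈ S)
    (hk : ∀ n, k ≤ n → n ∈ S) (hf : IsPowerAut S f) {x : ℕ} (hx : x ∈ S) :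
    ∃ t, f {x} = {t} := by
  have hfx := hf.1 _ (PS.singleton_mem hx)
  by_contra hne
  push Not at hne
  obtain ⟨Y, hY, Z, hZ, hYZ, hne⟩ := PS.exists_add_eq_add_ne hk hfx hne
  obtain ⟨Y', hY', rfl⟩ := hf.2.2.1 Y hY
  obtain ⟨Z', hZ', rfl⟩ := hf.2.2.1 Z hZ
  rw [← hf.map_add_s7 (PS.singleton_mem hx) hY', ← hf.map_add_s7 (PS.singleton_mem hx) hZ'] at hYZ
  have := hf.2.1 _ (PS.add_mem hS (PS.singleton_mem hx) hY') _
    (PS.add_mem hS (PS.singleton_mem hx) hZ') hYZ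
  exact hne (congrArg f (Finset.singleton_add_injective x this))

theorem map_singleton_s7 {k : ℕ} (hS : ∀ a ∈ S, ∀ b ∈ S, a + b ∈ S) (hk : ∀ n, k ≤ n → n ∈ S)
    (hf : IsPowerAut S f) {x : ℕ} (hx : x ∈ S) : f {x} = {x} := by
  set g : ℕ → ℕ := fun x => (f {x}).minElt
  have hfg : ∀ x ∈ S, f {x} = {g x} := by
    intro x hx
    obtain ⟨t, ht⟩ := hf.exists_map_singleton_eq hS hk hx
    simp only [g, ht, Finset.minElt_singleton]
  have hmaps : Set.MapsTo g S S := fun x hx => by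
    simpa [PS, hfg x hx] using hf.1 _ (PS.singleton_mem hx)
  have hinj : Set.InjOn g S := fun x hx y hy hxy => by
    refine Finset.singleton_injective (hf.2.1 _ (PS.singleton_mem hx) _ (PS.singleton_mem hy) ?_)
    rw [hfg x hx, hfg y hy, hxy]
  have hsurj : Set.SurjOn g S S := fun y hy => by
    have hF := hf.invFunOn hS
    obtain ⟨s, hs⟩ := hF.exists_map_singleton_eq hS hk hy
    have hsS : s ∈ S := by
      have := hF.1 _ (PS.singleton_mem hy)
      rw [hs] at this
      simpa [PS] using this
    have hfs : f {s} = {y} := hs ▸ hf.bijOn.invOn_invFunOn.2 (PS.singleton_mem hy)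
    exact ⟨s, hsS, Finset.singleton_injective ((hfg s hsS).symm.trans hfs)⟩
  have hadd : ∀ a ∈ S, ∀ b ∈ S, g (a + b) = g a + g b := fun a ha b hb => by
    have := hf.map_add_s7 (PS.singleton_mem ha) (PS.singleton_mem hb)
    rw [Finset.singleton_add_singleton, hfg _ (hS a ha b hb), hfg a ha, hfg b hb,
      Finset.singleton_add_singleton] at this
    exact Finset.singleton_injective this
  rw [hfg x hx, Set.eqOn_id_of_bijOn_of_map_add hS ⟨hmaps, hinj, hsurj⟩ hadd hx, id]

end IsPowerAut

theorem nonneg_of_map_add_of_forall_le {α : Type*} [Add α] {A : Set α}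
    (hA : ∀ x ∈ A, ∀ y ∈ A, x + y ∈ A) {φ : α → ℤ}
    (hφ : ∀ x ∈ A, ∀ y ∈ A, φ (x + y) = φ x + φ y) {B : ℤ} (hB : ∀ x ∈ A, B ≤ φ x)
    {x : α} (hx : x ∈ A) : 0 ≤ φ x := by
  have hmul : ∀ n : ℕ, ∃ y ∈ A, φ y = (n + 1) * φ x := by
    intro n
    induction n with
    | zero => exact ⟨x, hx, by simp⟩
    | succ n ih =>
      obtain ⟨y, hy, hφy⟩ := ih
      exact ⟨y + x, hA y hy x hx, by rw [hφ y hy x hx, hφy]; push_cast; ring⟩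
  obtain ⟨y, hy, hφy⟩ := hmul (-B).toNat
  have hBy := hB y hy
  have hB' := Int.self_le_toNat (-B)
  by_contra hneg
  nlinarith

noncomputable def minShift (f : Finset ℕ → Finset ℕ) (X : Finset ℕ) : ℤ :=
  (f X).minElt - X.minElt

namespace IsPowerAut

variable {S : Set ℕ} {k : ℕ} {f : Finset ℕ → Finset ℕ} {X Y : Finset ℕ}

theorem minShift_add (hf : IsPowerAut S f) (hX : X ∈ PS S) (hY : Y ∈ PS S) :
    minShift f (X + Y) = minShift f X + minShift f Y := by
  simp only [minShift, hf.map_add_s7 hX hY, Finset.minElt_add (hf.1 _ hX).1 (hf.1 _ hY).1,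
    Finset.minElt_add hX.1 hY.1]
  push_cast
  ring

theorem minShift_add_singleton (hS : ∀ a ∈ S, ∀ b ∈ S, a + b ∈ S) (hk : ∀ n, k ≤ n → n ∈ S)
    (hf : IsPowerAut S f) (hX : X ∈ PS S) {s : ℕ} (hs : s ∈ S) :
    minShift f (X + {s}) = minShift f X := by
  rw [hf.minShift_add hX (PS.singleton_mem hs), add_eq_left, minShift,
    hf.map_singleton_s7 hS hk hs, sub_self]

/-- Adding a long interval fills in every set with extreme points `a` and `b`. -/
theorem minShift_eq_of_extremes (hk : ∀ n, k ≤ n → n ∈ S) (hf : IsPowerAut S f)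
    (hX : X ∈ PS S) (hY : Y ∈ PS S) {a b : ℕ} (habX : {a, b} ⊆ X) (hXab : X ⊆ Finset.Icc a b)
    (habY : {a, b} ⊆ Y) (hYab : Y ⊆ Finset.Icc a b) : minShift f X = minShift f Y := by
  set W := Finset.Icc k (k + (b - a))
  have hW : W ∈ PS S :=
    PS.mem_of_forall_le hk (Finset.nonempty_Icc.mpr (by omega)) fun y hy => (Finset.mem_Icc.mp hy).1
  have hlong : b + k ≤ a + (k + (b - a)) + 1 := by omega
  have hXW : X + W = Y + W := by
    rw [Finset.add_Icc_eq_Icc habX hXab hlong, Finset.add_Icc_eq_Icc habY hYab hlong]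
  have := hf.minShift_add hX hW
  rw [hXW, hf.minShift_add hY hW] at this
  linarith

theorem neg_le_minShift (hS : ∀ a ∈ S, ∀ b ∈ S, a + b ∈ S) (hk : ∀ n, k ≤ n → n ∈ S)
    (hf : IsPowerAut S f) (hY : Y ∈ PS S) : -(k : ℤ) ≤ minShift f Y := by
  set m := Y.min' hY.1
  set M := Y.max' hY.1
  have hmM : m ≤ M := Y.min'_le _ (Y.max'_mem hY.1)
  have hmMY : {m, M} ⊆ Y :=
    Finset.insert_subset (Y.min'_mem hY.1) (Finset.singleton_subset_iff.mpr (Y.max'_mem hY.1))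
  have hextremes : minShift f Y = minShift f {m, M} := by
    refine hf.minShift_eq_of_extremes hk hY ⟨Finset.insert_nonempty _ _,
      (Finset.coe_subset.mpr hmMY).trans hY.2⟩ hmMY ?_ subset_rfl ?_
    · exact fun y hy => Finset.mem_Icc.mpr ⟨Y.min'_le y hy, Y.le_max' y hy⟩
    · simp only [Finset.insert_subset_iff, Finset.singleton_subset_iff, Finset.mem_Icc]
      omega
  have htranslate : ({m, M} : Finset ℕ) + {k} = {k, k + (M - m)} + {m} := by
    ext z
    simp only [Finset.mem_add, Finset.mem_insert, Finset.mem_singleton, exists_eq_or_imp,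
      exists_eq_left]
    omega
  have hP : {k, k + (M - m)} ∈ PS S := PS.mem_of_forall_le hk ⟨k, by simp⟩ (by simp)
  have hPk : ({k, k + (M - m)} : Finset ℕ).minElt ≤ k := Finset.minElt_le (by simp)
  calc -(k : ℤ) ≤ minShift f {k, k + (M - m)} := by unfold minShift; omega
    _ = minShift f ({m, M} + {k}) := by
      rw [htranslate, hf.minShift_add_singleton hS hk hP (hY.2 (Y.min'_mem hY.1))]
    _ = minShift f Y := by
      rw [hf.minShift_add_singleton hS hk _ (hk k le_rfl), hextremes]
      exact ⟨Finset.insert_nonempty _ _, (Finset.coe_subset.mpr hmMY).trans hY.2⟩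

theorem minElt_le_minElt_apply (hS : ∀ a ∈ S, ∀ b ∈ S, a + b ∈ S) (hk : ∀ n, k ≤ n → n ∈ S)
    (hf : IsPowerAut S f) (hX : X ∈ PS S) : X.minElt ≤ (f X).minElt := by
  have := nonneg_of_map_add_of_forall_le (fun _ hX _ hY => PS.add_mem hS hX hY)
    (fun _ hX _ hY => hf.minShift_add hX hY) (fun _ hY => hf.neg_le_minShift hS hk hY) hX
  unfold minShift at this
  omega

theorem minElt_apply (hS : ∀ a ∈ S, ∀ b ∈ S, a + b ∈ S) (hk : ∀ n, k ≤ n → n ∈ S)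
    (hf : IsPowerAut S f) (hX : X ∈ PS S) : (f X).minElt = X.minElt := by
  refine le_antisymm ?_ (hf.minElt_le_minElt_apply hS hk hX)
  calc (f X).minElt ≤ (Function.invFunOn f (PS S) (f X)).minElt :=
        (hf.invFunOn hS).minElt_le_minElt_apply hS hk (hf.1 X hX)
    _ = X.minElt := by rw [hf.bijOn.invOn_invFunOn.1 hX]

theorem apply_mem_Ici_iff (hS : ∀ a ∈ S, ∀ b ∈ S, a + b ∈ S) (hk : ∀ n, k ≤ n → n ∈ S)
    (hf : IsPowerAut S f) (hX : X ∈ PS S) :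
    f X ∈ PS {n | k ≤ n} ↔ X ∈ PS {n | k ≤ n} := by
  rw [PS.mem_Ici_iff hk, PS.mem_Ici_iff hk, hf.minElt_apply hS hk hX]
  simp only [hX, hf.1 X hX, true_and]

end IsPowerAut

/-- An automorphism of `P(S)` maps `P(S_θ)` into itself and restricts to an
automorphism of `P(S_θ)`, where `S_θ = [k, ∞)` for `k` the critical element. -/
theorem stmt7 (S : Set ℕ) (hS : IsNumSgp S) (k : ℕ) (hk : IsCritical S k)
    (f : Finset ℕ → Finset ℕ) (hf : IsPowerAut S f) :
    (∀ X ∈ PS {n : ℕ | k ≤ n}, f X ∈ PS {n : ℕ | k ≤ n}) ∧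
    IsPowerAut {n : ℕ | k ≤ n} f := by
  have hsub : PS {n | k ≤ n} ⊆ PS S := fun X hX => ((PS.mem_Ici_iff hk.1).mp hX).1
  have hmaps : ∀ X ∈ PS {n : ℕ | k ≤ n}, f X ∈ PS {n : ℕ | k ≤ n} := fun X hX =>
    (hf.apply_mem_Ici_iff hS.1 hk.1 (hsub hX)).mpr hX
  refine ⟨hmaps, hmaps, fun X hX Y hY => hf.2.1 X (hsub hX) Y (hsub hY), fun Y hY => ?_,
    fun X hX Y hY => hf.map_add_s7 (hsub hX) (hsub hY)⟩
  obtain ⟨X, hX, rfl⟩ := hf.2.2.1 Y (hsub hY)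
  exact ⟨X, (hf.apply_mem_Ici_iff hS.1 hk.1 hX).mp hY, rfl⟩
end
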